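/- arXiv:2101.07475 — 2 statements merged into one kernel-verified Lean document; each statement's English description precedes it below -/
import Mathlib

section
/- Let N be a closed Riemannian manifold of dimension n+1, p ∈ N, and let u₀, u₁ ∈ L∞(N) with u₀ ≥ u₁ and |u₀|, |u₁| ≤ 1. Let h : ℝ → [−1,1] be piecewise C¹ with h' ∈ L∞ and with e_ε(h) supported in [−a, a]. Define b^r(x) = h(d(x,p) − r). Then for all 0 < s₁ < s₂ and ε > 0: ∫_{s₁}^{s₂} E_ε(b^r, {u₀ > b^r > u₁}) dr ≤ ∫_{B(p, s₂ + a)} ∫_{{t : u₀(x) > h(t) > u₁(x)}} e_ε(h)(t) dt dH^{n+1}(x). -/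
open MeasureTheory Filter
open scoped ENNReal

noncomputable section

/-- Model of the ambient (closed Riemannian) manifold: Euclidean space of dimension `d`,
functions are real-valued, the gradient is `gradient` from Mathlib. -/
abbrev Eu (d : ℕ) := EuclideanSpace ℝ (Fin d)

/-- A smooth, bounded, symmetric double-well potential `W : ℝ → [0,∞)` with exactly three
critical points `0, ±1`, `W(±1) = 0`, `W''(±1) > 0` and `0` a local maximum. -/
structure DoubleWell (W : ℝ → ℝ) : Prop where
  smooth : ContDiff ℝ (⊤ : ℕ∞) W
  nonneg : ∀ t, 0 ≤ W t
  bounded : ∃ C, ∀ t, W t ≤ C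
  symm : ∀ t, W (-t) = W t
  zero_iff : ∀ t, W t = 0 ↔ (t = 1 ∨ t = -1)
  critical_iff : ∀ t, deriv W t = 0 ↔ (t = 0 ∨ t = 1 ∨ t = -1)
  second_deriv_pos : 0 < deriv (deriv W) 1
  zero_local_max : IsLocalMax W 0

/-- The Allen–Cahn energy density `e_ε(u) = ε|∇u|²/2 + W(u)/ε`. -/
def acDensity {d : ℕ} (W : ℝ → ℝ) (ε : ℝ) (u : Eu d → ℝ) (x : Eu d) : ℝ :=
  ε * ‖gradient u x‖ ^ 2 / 2 + W (u x) / ε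

/-- The Allen–Cahn energy on a measurable set `S`: `E_ε(u, S) = ∫_S e_ε(u)`. -/
def acEnergyOn {d : ℕ} (W : ℝ → ℝ) (ε : ℝ) (μ : Measure (Eu d)) (u : Eu d → ℝ)
    (S : Set (Eu d)) : ℝ :=
  ∫ x in S, acDensity W ε u x ∂μ

/-- The total Allen–Cahn energy `E_ε(u)`. -/
def acEnergy {d : ℕ} (W : ℝ → ℝ) (ε : ℝ) (μ : Measure (Eu d)) (u : Eu d → ℝ) : ℝ :=
  acEnergyOn W ε μ u Set.univ

/-- Membership in the Sobolev space `H¹`: `u ∈ L²` and `∇u ∈ L²`. -/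
def MemH1 {d : ℕ} (μ : Measure (Eu d)) (u : Eu d → ℝ) : Prop :=
  MemLp u 2 μ ∧ MemLp (fun x => gradient u x) 2 μ

/-- The `H¹` distance between two functions. -/
def H1dist {d : ℕ} (μ : Measure (Eu d)) (u v : Eu d → ℝ) : ℝ≥0∞ :=
  eLpNorm (u - v) 2 μ + eLpNorm (fun x => gradient u x - gradient v x) 2 μ

/-- Continuity of a path `u : I → H¹`. -/
def H1ContinuousOn {d : ℕ} (μ : Measure (Eu d)) (u : ℝ → Eu d → ℝ) (I : Set ℝ) : Prop :=
  ∀ t ∈ I, ∀ δ : ℝ≥0∞, 0 < δ → ∃ η > (0:ℝ), ∀ s ∈ I, |s - t| < η → H1dist μ (u s) (u t) < δ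

/-- A path is nested if `u(t) ≥ u(s)` a.e. whenever `t ≤ s` in `I`. -/
def NestedOn {d : ℕ} (μ : Measure (Eu d)) (u : ℝ → Eu d → ℝ) (I : Set ℝ) : Prop :=
  ∀ t ∈ I, ∀ s ∈ I, t ≤ s → ∀ᵐ x ∂μ, u s x ≤ u t x

/-- The energy constant `σ = ∫_{-1}^{1} √(W(s)/2) ds`. -/
def sigmaW (W : ℝ → ℝ) : ℝ := ∫ s in (-1:ℝ)..1, Real.sqrt (W s / 2)

open scoped Topology in
theorem grad_bound {d : ℕ} (p : Eu d) (h : ℝ → ℝ) (r L : ℝ) (x : Eu d)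
    (hder : HasDerivAt h L (dist x p - r)) :
    ‖gradient (fun y : Eu d => h (dist y p - r)) x‖ ≤ |L| := by
  set f : Eu d → ℝ := fun y => h (dist y p - r) with hf
  have hnormgrad : ‖gradient f x‖ = ‖fderiv ℝ f x‖ := by
    unfold gradient
    rw [LinearIsometryEquiv.norm_map]
  by_cases hdf : DifferentiableAt ℝ f x
  · rw [hnormgrad]
    refine le_of_forall_pos_le_add fun ε' hε' => ?_
    refine hdf.hasFDerivAt.le_of_lip' (by positivity) ?_
    set t := dist x p - r with ht
    have h1 : ∀ᶠ τ in 𝓝 t, |h τ - h t| ≤ (|L| + ε') * |τ - t| := by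
      have h2 := (hasDerivAt_iff_isLittleO.mp hder).def hε'
      filter_upwards [h2] with τ hτ
      have h3 : |h τ - h t - (τ - t) * L| ≤ ε' * |τ - t| := by
        simpa [Real.norm_eq_abs, smul_eq_mul, mul_comm] using hτ
      calc |h τ - h t| ≤ |h τ - h t - (τ - t) * L| + |(τ - t) * L| := by
            have := abs_add_le (h τ - h t - (τ - t) * L) ((τ - t) * L)
            simpa using this
        _ ≤ ε' * |τ - t| + |τ - t| * |L| := by
            rw [abs_mul]; exact add_le_add h3 le_rfl
        _ = (|L| + ε') * |τ - t| := by ring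
    have hcont2 : Tendsto (fun y : Eu d => dist y p - r) (𝓝 x) (𝓝 (dist x p - r)) :=
      ((continuous_id.dist continuous_const).sub continuous_const).tendsto x
    filter_upwards [hcont2.eventually h1] with y hy
    calc ‖f y - f x‖ = |h (dist y p - r) - h (dist x p - r)| := rfl
      _ ≤ (|L| + ε') * |dist y p - r - (dist x p - r)| := hy
      _ ≤ (|L| + ε') * ‖y - x‖ := by
          have h4 : |dist y p - r - (dist x p - r)| ≤ ‖y - x‖ := by
            have h5 : |dist y p - dist x p| ≤ dist y x := abs_dist_sub_le y x p
            rw [dist_eq_norm] at h5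
            calc |dist y p - r - (dist x p - r)| = |dist y p - dist x p| := by ring_nf
              _ ≤ ‖y - x‖ := h5
          have : (0:ℝ) ≤ |L| + ε' := by positivity
          exact mul_le_mul_of_nonneg_left h4 this
  · rw [hnormgrad, fderiv_zero_of_not_differentiableAt hdf]
    simp

/-- coarea estimate for radial profiles `b^r(x) = h(d(x,p) − r)`. -/
theorem coarea_estimate_for_radial_profiles
    {d : ℕ} (μ : Measure (Eu d)) [IsFiniteMeasure μ]
    (W : ℝ → ℝ) (hW : DoubleWell W) (ε : ℝ) (hε : 0 < ε)
    (u₀ u₁ : Eu d → ℝ) (hm₀ : Measurable u₀) (hm₁ : Measurable u₁)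
    (h10 : u₁ ≤ᵐ[μ] u₀)
    (hb₀ : ∀ᵐ x ∂μ, |u₀ x| ≤ 1) (hb₁ : ∀ᵐ x ∂μ, |u₁ x| ≤ 1)
    (h h' : ℝ → ℝ) (a : ℝ) (ha : 0 < a)
    (hhb : ∀ t, |h t| ≤ 1)
    (hderiv : ∀ᵐ t ∂(volume : Measure ℝ), HasDerivAt h (h' t) t)
    (h'bdd : ∃ C, ∀ t, |h' t| ≤ C)
    (hsupp : ∀ t, t ∉ Set.Icc (-a) a → ε * h' t ^ 2 / 2 + W (h t) / ε = 0)
    (p : Eu d) (s₁ s₂ : ℝ) (hs₁ : 0 < s₁) (hs₁₂ : s₁ < s₂) :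
    ∫ r in Set.Ioc s₁ s₂,
        acEnergyOn W ε μ (fun x => h (dist x p - r))
          {x | u₁ x < h (dist x p - r) ∧ h (dist x p - r) < u₀ x}
      ≤ ∫ x in Metric.ball p (s₂ + a),
          (∫ t in {t | u₁ x < h t ∧ h t < u₀ x}, (ε * h' t ^ 2 / 2 + W (h t) / ε)) ∂μ := by
  classical
  obtain ⟨C, hC⟩ := h'bdd
  obtain ⟨CW, hCW⟩ := hW.bounded
  have hC0 : (0:ℝ) ≤ C := le_trans (abs_nonneg _) (hC 0)
  have hCW0 : (0:ℝ) ≤ CW := le_trans (hW.nonneg 0) (hCW 0)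
  set e : ℝ → ℝ := fun t => ε * h' t ^ 2 / 2 + W (h t) / ε with he_def
  -- measurable version of h
  have hcont : ∀ᵐ t ∂(volume : Measure ℝ), ContinuousAt h t :=
    hderiv.mono fun t ht => ht.continuousAt
  have hCm : MeasurableSet {t | ContinuousAt h t} := (IsGδ.setOf_continuousAt h).measurableSet
  have hhae : AEMeasurable h (volume : Measure ℝ) := by
    have hr0 : (volume : Measure ℝ).restrict {t | ContinuousAt h t}ᶜ = 0 := by
      rw [Measure.restrict_eq_zero]
      rw [ae_iff] at hcont
      simpa [Set.compl_setOf] using hcont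
    have hvol : (volume : Measure ℝ) = volume.restrict {t | ContinuousAt h t} := by
      conv_lhs => rw [← Measure.restrict_add_restrict_compl (μ := (volume : Measure ℝ)) hCm]
      rw [hr0, add_zero]
    rw [hvol]
    exact (ContinuousOn.aemeasurable (fun t ht => (ht : ContinuousAt h t).continuousWithinAt) hCm)
  set g : ℝ → ℝ := hhae.mk h with hg_def
  have hg : Measurable g := hhae.measurable_mk
  have hge : h =ᵐ[(volume : Measure ℝ)] g := hhae.ae_eq_mk
  -- the bad null set
  have hNae : ∀ᵐ t ∂(volume : Measure ℝ), HasDerivAt h (h' t) t ∧ h t = g t := hderiv.and hge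
  obtain ⟨N, hNsub, hNm, hN0⟩ :=
    exists_measurable_superset_of_null (ae_iff.mp hNae)
  have hgoodt : ∀ t, t ∉ N → HasDerivAt h (h' t) t ∧ h t = g t := by
    intro t ht
    by_contra hcon
    exact ht (hNsub hcon)
  have haeN : ∀ᵐ t ∂(volume : Measure ℝ), t ∉ N := by
    rw [ae_iff]; simpa using hN0
  -- measurable energy density
  set ee : ℝ → ℝ := fun t => ε * (deriv h t) ^ 2 / 2 + W (g t) / ε with hee_def
  have hee_meas : Measurable ee := by
    have h1 : Measurable (deriv h) := measurable_deriv h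
    have h2 : Measurable fun t => W (g t) := hW.smooth.continuous.measurable.comp hg
    exact ((measurable_const.mul (h1.pow_const 2)).div_const 2).add (h2.div_const ε)
  have hee0 : ∀ t, 0 ≤ ee t :=
    fun t => add_nonneg (by positivity) (div_nonneg (hW.nonneg _) hε.le)
  have he0 : ∀ t, 0 ≤ e t :=
    fun t => add_nonneg (by positivity) (div_nonneg (hW.nonneg _) hε.le)
  have heeq : ∀ t, t ∉ N → ee t = e t := by
    intro t ht
    obtain ⟨h1, h2⟩ := hgoodt t ht
    simp only [hee_def, he_def, h1.deriv, ← h2]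
  set B : ℝ := ε * C ^ 2 / 2 + CW / ε with hB_def
  have heB : ∀ t, e t ≤ B := by
    intro t
    have h1 : h' t ^ 2 ≤ C ^ 2 := by
      rw [← sq_abs (h' t)]
      exact pow_le_pow_left₀ (abs_nonneg _) (hC t) 2
    have h2 : W (h t) ≤ CW := hCW _
    show ε * h' t ^ 2 / 2 + W (h t) / ε ≤ ε * C ^ 2 / 2 + CW / ε
    gcongr
  have hB0 : (0:ℝ) ≤ B := le_trans (he0 0) (heB 0)
  have hindIcc : ∀ t, Set.indicator (Set.Icc (-a) a) e t = e t := by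
    intro t
    by_cases h1 : t ∈ Set.Icc (-a) a
    · simp [h1]
    · rw [Set.indicator_of_notMem h1]
      show (0:ℝ) = ε * h' t ^ 2 / 2 + W (h t) / ε
      exact (hsupp t h1).symm
  set eec : ℝ → ℝ := Set.indicator (Set.Icc (-a) a) ee with heec_def
  have heec_meas : Measurable eec := hee_meas.indicator measurableSet_Icc
  have heece : ∀ t, t ∉ N → eec t = e t := by
    intro t ht
    rw [heec_def, ← hindIcc t]
    by_cases h1 : t ∈ Set.Icc (-a) a
    · simp [h1, heeq t ht]
    · simp [h1]
  have heec_int : Integrable eec (volume : Measure ℝ) := by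
    refine Integrable.mono' (g := Set.indicator (Set.Icc (-a) a) (fun _ => B)) ?_
      heec_meas.aestronglyMeasurable ?_
    · rw [integrable_indicator_iff measurableSet_Icc]
      exact integrableOn_const measure_Icc_lt_top.ne
    · filter_upwards [haeN] with t ht
      rw [heec_def]
      by_cases h1 : t ∈ Set.Icc (-a) a
      · rw [Set.indicator_of_mem h1, Set.indicator_of_mem h1, Real.norm_eq_abs,
          abs_of_nonneg (hee0 t), heeq t ht]
        exact heB t
      · simp [h1]
  -- setup product measure
  set ν : Measure ℝ := (volume : Measure ℝ).restrict (Set.Ioc s₁ s₂) with hν_def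
  have hνfin : IsFiniteMeasure ν := by
    constructor
    rw [hν_def, Measure.restrict_apply_univ]
    exact measure_Ioc_lt_top
  have hνle : ν ≤ (volume : Measure ℝ) := Measure.restrict_le_self
  have hτc : Continuous (fun q : Eu d × ℝ => dist q.1 p - q.2) :=
    ((continuous_fst.dist continuous_const).sub continuous_snd)
  have hτ : Measurable (fun q : Eu d × ℝ => dist q.1 p - q.2) := hτc.measurable
  set K : Set (Eu d × ℝ) :=
    {q : Eu d × ℝ | u₁ q.1 < g (dist q.1 p - q.2) ∧ g (dist q.1 p - q.2) < u₀ q.1} with hK_def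
  have hKm : MeasurableSet K := by
    rw [hK_def, Set.setOf_and]
    exact (measurableSet_lt (hm₁.comp measurable_fst) (hg.comp hτ)).inter
      (measurableSet_lt (hg.comp hτ) (hm₀.comp measurable_fst))
  set Φ : Eu d × ℝ → ℝ := K.indicator (fun q => ee (dist q.1 p - q.2)) with hΦ_def
  have hΦm : Measurable Φ := (hee_meas.comp hτ).indicator hKm
  have hΦ0 : ∀ q, 0 ≤ Φ q := fun q => Set.indicator_nonneg (fun q _ => hee0 _) q
  -- the bad set in the product is null
  have hsecnull : ∀ c : ℝ, (volume : Measure ℝ) ((fun r => c - r) ⁻¹' N) = 0 := by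
    intro c
    rw [(Measure.measurePreserving_sub_left (volume : Measure ℝ) c).measure_preimage
      hNm.nullMeasurableSet]
    exact hN0
  have hA0 : (μ.prod ν) {q : Eu d × ℝ | dist q.1 p - q.2 ∈ N} = 0 := by
    have hAm : MeasurableSet {q : Eu d × ℝ | dist q.1 p - q.2 ∈ N} := hτ hNm
    rw [Measure.prod_apply hAm]
    have h1 : ∀ x : Eu d, ν {r | dist x p - r ∈ N} = 0 := fun x =>
      le_antisymm (le_trans (hνle _) (le_of_eq (hsecnull (dist x p)))) zero_le
    simp [h1]
  have haeprod : ∀ᵐ q ∂(μ.prod ν), dist q.1 p - q.2 ∉ N := by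
    rw [ae_iff]; simpa using hA0
  have hgood : ∀ᵐ r ∂ν, ∀ᵐ x ∂μ, dist x p - r ∉ N := by
    have h1 : (ν.prod μ) {q : ℝ × Eu d | dist q.2 p - q.1 ∈ N} = 0 := by
      rw [← Measure.prod_swap]
      have hAm2 : MeasurableSet {q : ℝ × Eu d | dist q.2 p - q.1 ∈ N} :=
        (((continuous_snd.dist continuous_const).sub continuous_fst).measurable) hNm
      rw [Measure.map_apply measurable_swap hAm2]
      have : Prod.swap ⁻¹' {q : ℝ × Eu d | dist q.2 p - q.1 ∈ N}
          = {q : Eu d × ℝ | dist q.1 p - q.2 ∈ N} := rfl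
      rw [this]
      exact hA0
    have h2 : ∀ᵐ q ∂(ν.prod μ), dist q.2 p - q.1 ∉ N := by
      rw [ae_iff]; simpa using h1
    exact Measure.ae_ae_of_ae_prod h2
  -- integrability of Φ
  have hΦint : Integrable Φ (μ.prod ν) := by
    refine Integrable.mono' (integrable_const B) hΦm.aestronglyMeasurable ?_
    filter_upwards [haeprod] with q hq
    calc ‖Φ q‖ ≤ ‖ee (dist q.1 p - q.2)‖ := by
          rw [hΦ_def]; exact norm_indicator_le_norm_self _ _
      _ ≤ B := by
          rw [Real.norm_eq_abs, abs_of_nonneg (hee0 _), heeq _ hq]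
          exact heB _
  have hacd : ∀ (u : Eu d → ℝ) (x : Eu d), 0 ≤ acDensity W ε u x := fun u x =>
    add_nonneg (by positivity) (div_nonneg (hW.nonneg _) hε.le)
  -- step 1
  have step1 : (∫ r, acEnergyOn W ε μ (fun x => h (dist x p - r))
        {x | u₁ x < h (dist x p - r) ∧ h (dist x p - r) < u₀ x} ∂ν)
      ≤ ∫ r, (∫ x, Φ (x, r) ∂μ) ∂ν := by
    refine integral_mono_of_nonneg (Eventually.of_forall fun r => integral_nonneg fun x => hacd _ _)
      ((hΦint.swap).integral_prod_left) ?_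
    filter_upwards [hgood, hΦint.prod_left_ae] with r hr hint
    have hDm : Measurable fun x : Eu d => g (dist x p - r) :=
      hg.comp (((continuous_id.dist continuous_const).sub continuous_const).measurable)
    set S' : Set (Eu d) := {x | u₁ x < g (dist x p - r)} ∩ {x | g (dist x p - r) < u₀ x} with hS'_def
    have hS'm : MeasurableSet S' :=
      (measurableSet_lt hm₁ hDm).inter (measurableSet_lt hDm hm₀)
    have hsetae : {x | u₁ x < h (dist x p - r) ∧ h (dist x p - r) < u₀ x} =ᵐ[μ] S' := by
      rw [Filter.eventuallyEq_set]
      filter_upwards [hr] with x hx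
      have hxg : h (dist x p - r) = g (dist x p - r) := (hgoodt _ hx).2
      simp [hS'_def, Set.mem_inter_iff, Set.mem_setOf_eq, hxg]
    show acEnergyOn W ε μ (fun x => h (dist x p - r))
        {x | u₁ x < h (dist x p - r) ∧ h (dist x p - r) < u₀ x} ≤ ∫ x, Φ (x, r) ∂μ
    unfold acEnergyOn
    rw [Measure.restrict_congr_set hsetae, ← integral_indicator hS'm]
    refine integral_mono_of_nonneg
      (Eventually.of_forall fun x => Set.indicator_nonneg (fun x _ => hacd _ _) x) hint ?_
    filter_upwards [hr] with x hx
    by_cases hxS : x ∈ S'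
    · rw [Set.indicator_of_mem hxS]
      have hxK : (x, r) ∈ K := ⟨hxS.1, hxS.2⟩
      have hΦval : Φ (x, r) = ee (dist x p - r) := Set.indicator_of_mem hxK _
      show acDensity W ε (fun x => h (dist x p - r)) x ≤ Φ (x, r)
      rw [hΦval, heeq _ hx]
      obtain ⟨hderx, hgx⟩ := hgoodt _ hx
      have hgb := grad_bound p h r (h' (dist x p - r)) x hderx
      have h2 : ‖gradient (fun y => h (dist y p - r)) x‖ ^ 2 ≤ h' (dist x p - r) ^ 2 := by
        rw [← sq_abs (h' _)]
        exact pow_le_pow_left₀ (norm_nonneg _) hgb 2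
      show ε * ‖gradient (fun y => h (dist y p - r)) x‖ ^ 2 / 2 + W (h (dist x p - r)) / ε
          ≤ ε * h' (dist x p - r) ^ 2 / 2 + W (h (dist x p - r)) / ε
      gcongr
    · rw [Set.indicator_of_notMem hxS]
      exact hΦ0 _
  -- step 2
  have step2 : (∫ r, (∫ x, Φ (x, r) ∂μ) ∂ν) = ∫ x, (∫ r, Φ (x, r) ∂ν) ∂μ :=
    (integral_integral_swap (f := fun x r => Φ (x, r)) hΦint).symm
  -- pointwise (in x) estimates
  set Tg : Eu d → Set ℝ := fun x => {t | u₁ x < g t} ∩ {t | g t < u₀ x} with hTg_def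
  have hTgm : ∀ x, MeasurableSet (Tg x) :=
    fun x => (measurableSet_lt measurable_const hg).inter (measurableSet_lt hg measurable_const)
  have hTae : ∀ x, {t | u₁ x < h t ∧ h t < u₀ x} =ᵐ[(volume : Measure ℝ)] Tg x := by
    intro x
    rw [Filter.eventuallyEq_set]
    filter_upwards [hge] with t ht
    simp [hTg_def, Set.mem_inter_iff, Set.mem_setOf_eq, ht]
  have hInner_eq : ∀ x, (∫ t in {t | u₁ x < h t ∧ h t < u₀ x}, e t)
      = ∫ t, Set.indicator (Tg x) eec t := by
    intro x
    calc (∫ t in {t | u₁ x < h t ∧ h t < u₀ x}, e t) = ∫ t in Tg x, e t := by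
          rw [Measure.restrict_congr_set (hTae x)]
      _ = ∫ t in Tg x, eec t :=
          integral_congr_ae (ae_restrict_of_ae (haeN.mono fun t ht => (heece t ht).symm))
      _ = ∫ t, Set.indicator (Tg x) eec t := (integral_indicator (hTgm x)).symm
  have hΦxr : ∀ (x : Eu d) (r : ℝ), Φ (x, r) = Set.indicator (Tg x) ee (dist x p - r) := by
    intro x r
    by_cases h1 : u₁ x < g (dist x p - r) ∧ g (dist x p - r) < u₀ x
    · rw [hΦ_def, Set.indicator_of_mem (show (x, r) ∈ K from h1),
        Set.indicator_of_mem (show dist x p - r ∈ Tg x from ⟨h1.1, h1.2⟩)]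
    · rw [hΦ_def, Set.indicator_of_notMem (show (x, r) ∉ K from h1),
        Set.indicator_of_notMem (show dist x p - r ∉ Tg x from fun hc => h1 ⟨hc.1, hc.2⟩)]
  have hindTg0 : ∀ (x : Eu d) (t : ℝ), 0 ≤ Set.indicator (Tg x) eec t :=
    fun x t => Set.indicator_nonneg (fun s _ => Set.indicator_nonneg (fun u _ => hee0 u) s) t
  have hxle : ∀ x : Eu d, (∫ r, Φ (x, r) ∂ν) ≤ Set.indicator (Metric.ball p (s₂ + a))
      (fun x => ∫ t in {t | u₁ x < h t ∧ h t < u₀ x}, e t) x := by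
    intro x
    by_cases hxb : x ∈ Metric.ball p (s₂ + a)
    · rw [Set.indicator_of_mem hxb, hInner_eq x]
      have e1 : (∫ r, Φ (x, r) ∂ν)
          = ∫ r, Set.indicator (Set.Ioc s₁ s₂)
              (fun r => Set.indicator (Tg x) ee (dist x p - r)) r := by
        rw [hν_def]
        simp_rw [hΦxr x]
        rw [integral_indicator measurableSet_Ioc]
      have e2 : (∫ r, Set.indicator (Set.Ioc s₁ s₂)
              (fun r => Set.indicator (Tg x) ee (dist x p - r)) r)
          = ∫ r, Set.indicator (Set.Ico (dist x p - s₂) (dist x p - s₁))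
              (Set.indicator (Tg x) ee) (dist x p - r) := by
        congr 1
        funext r
        by_cases h1 : r ∈ Set.Ioc s₁ s₂
        · have h2 : dist x p - r ∈ Set.Ico (dist x p - s₂) (dist x p - s₁) :=
            ⟨by linarith [h1.2], by linarith [h1.1]⟩
          rw [Set.indicator_of_mem h1, Set.indicator_of_mem h2]
        · have h2 : dist x p - r ∉ Set.Ico (dist x p - s₂) (dist x p - s₁) := by
            intro hc
            exact h1 ⟨by linarith [hc.2], by linarith [hc.1]⟩
          rw [Set.indicator_of_notMem h1, Set.indicator_of_notMem h2]
      have e3 : (∫ r, Set.indicator (Set.Ico (dist x p - s₂) (dist x p - s₁))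
              (Set.indicator (Tg x) ee) (dist x p - r))
          = ∫ t, Set.indicator (Set.Ico (dist x p - s₂) (dist x p - s₁))
              (Set.indicator (Tg x) ee) t :=
        integral_sub_left_eq_self _ _ (dist x p)
      rw [e1, e2, e3]
      refine integral_mono_of_nonneg
        (Eventually.of_forall fun t => Set.indicator_nonneg
          (fun s _ => Set.indicator_nonneg (fun u _ => hee0 u) s) t)
        (heec_int.indicator (hTgm x)) ?_
      filter_upwards [haeN] with t ht
      by_cases h1 : t ∈ Set.Ico (dist x p - s₂) (dist x p - s₁)
      · rw [Set.indicator_of_mem h1]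
        by_cases h2 : t ∈ Tg x
        · rw [Set.indicator_of_mem h2, Set.indicator_of_mem h2, heec_def]
          by_cases h3 : t ∈ Set.Icc (-a) a
          · rw [Set.indicator_of_mem h3]
          · rw [Set.indicator_of_notMem h3, heeq t ht]
            exact le_of_eq (hsupp t h3)
        · rw [Set.indicator_of_notMem h2, Set.indicator_of_notMem h2]
      · rw [Set.indicator_of_notMem h1]
        exact hindTg0 x t
    · rw [Set.indicator_of_notMem hxb]
      have hxd : s₂ + a ≤ dist x p := le_of_not_gt (fun hc => hxb (Metric.mem_ball.mpr hc))
      have hz : ∀ᵐ r ∂ν, Φ (x, r) = 0 := by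
        rw [hν_def, ae_restrict_iff' measurableSet_Ioc]
        have hpre : ∀ᵐ r ∂(volume : Measure ℝ), dist x p - r ∉ N := by
          rw [ae_iff]; simp only [not_not]; exact hsecnull (dist x p)
        have hsingle : ∀ᵐ r ∂(volume : Measure ℝ), r ≠ dist x p - a := by
          rw [ae_iff]
          have : {r : ℝ | ¬r ≠ dist x p - a} = {dist x p - a} := by
            ext r; simp [Set.mem_setOf_eq]
          rw [this]
          exact Real.volume_singleton
        filter_upwards [hpre, hsingle] with r hrN hrs hrI
        have ht1 : a ≤ dist x p - r := by
          have := hrI.2; linarith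
        have ht2 : dist x p - r ≠ a := fun hc => hrs (by linarith)
        have ht3 : dist x p - r ∉ Set.Icc (-a) a := fun hc => ht2 (le_antisymm hc.2 ht1)
        have hz1 : ee (dist x p - r) = 0 := by
          rw [heeq _ hrN]; exact hsupp _ ht3
        rw [hΦxr x r]
        by_cases h2 : dist x p - r ∈ Tg x
        · rw [Set.indicator_of_mem h2]; exact hz1
        · rw [Set.indicator_of_notMem h2]
      have : (∫ r, Φ (x, r) ∂ν) = 0 := by
        rw [hν_def] at hz ⊢
        exact integral_eq_zero_of_ae hz
      exact le_of_eq this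
  -- integrability of the indicator upper bound
  set B₂ : ℝ := ∫ t, eec t with hB₂_def
  have hf₂m : Measurable (Set.indicator {q : (ℝ × ℝ) × ℝ | q.1.2 < g q.2 ∧ g q.2 < q.1.1}
      (fun q => eec q.2)) := by
    refine (heec_meas.comp measurable_snd).indicator ?_
    rw [Set.setOf_and]
    exact (measurableSet_lt (measurable_fst.snd) (hg.comp measurable_snd)).inter
      (measurableSet_lt (hg.comp measurable_snd) (measurable_fst.fst))
  have hΨ : StronglyMeasurable fun ab : ℝ × ℝ =>
      ∫ t, Set.indicator {q : (ℝ × ℝ) × ℝ | q.1.2 < g q.2 ∧ g q.2 < q.1.1}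
        (fun q => eec q.2) (ab, t) :=
    hf₂m.stronglyMeasurable.integral_prod_right'
  have hmeasInner : Measurable fun x : Eu d => ∫ t, Set.indicator (Tg x) eec t := by
    have hcomp : (fun x : Eu d => ∫ t, Set.indicator (Tg x) eec t)
        = (fun ab : ℝ × ℝ =>
            ∫ t, Set.indicator {q : (ℝ × ℝ) × ℝ | q.1.2 < g q.2 ∧ g q.2 < q.1.1}
              (fun q => eec q.2) (ab, t)) ∘ (fun x => (u₀ x, u₁ x)) := by
      funext x
      show (∫ t, Set.indicator (Tg x) eec t)
          = ∫ t, Set.indicator {q : (ℝ × ℝ) × ℝ | q.1.2 < g q.2 ∧ g q.2 < q.1.1}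
              (fun q => eec q.2) ((u₀ x, u₁ x), t)
      refine integral_congr_ae (Eventually.of_forall fun t => ?_)
      show Set.indicator (Tg x) eec t
          = Set.indicator {q : (ℝ × ℝ) × ℝ | q.1.2 < g q.2 ∧ g q.2 < q.1.1}
              (fun q => eec q.2) ((u₀ x, u₁ x), t)
      by_cases h1 : u₁ x < g t ∧ g t < u₀ x
      · rw [Set.indicator_of_mem (show t ∈ Tg x from ⟨h1.1, h1.2⟩),
          Set.indicator_of_mem (show ((u₀ x, u₁ x), t)
            ∈ {q : (ℝ × ℝ) × ℝ | q.1.2 < g q.2 ∧ g q.2 < q.1.1} from h1)]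
      · rw [Set.indicator_of_notMem (show t ∉ Tg x from fun hc => h1 ⟨hc.1, hc.2⟩),
          Set.indicator_of_notMem (show ((u₀ x, u₁ x), t)
            ∉ {q : (ℝ × ℝ) × ℝ | q.1.2 < g q.2 ∧ g q.2 < q.1.1} from h1)]
    rw [hcomp]
    exact hΨ.measurable.comp (hm₀.prodMk hm₁)
  have hmeasF : Measurable fun x : Eu d => ∫ t in {t | u₁ x < h t ∧ h t < u₀ x}, e t := by
    have : (fun x : Eu d => ∫ t in {t | u₁ x < h t ∧ h t < u₀ x}, e t)
        = fun x : Eu d => ∫ t, Set.indicator (Tg x) eec t := funext hInner_eq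
    rw [this]
    exact hmeasInner
  have hFle : ∀ x : Eu d, ‖Set.indicator (Metric.ball p (s₂ + a))
      (fun x => ∫ t in {t | u₁ x < h t ∧ h t < u₀ x}, e t) x‖ ≤ B₂ := by
    intro x
    calc ‖Set.indicator (Metric.ball p (s₂ + a))
          (fun x => ∫ t in {t | u₁ x < h t ∧ h t < u₀ x}, e t) x‖
        ≤ ‖∫ t in {t | u₁ x < h t ∧ h t < u₀ x}, e t‖ := norm_indicator_le_norm_self _ _
      _ = ‖∫ t, Set.indicator (Tg x) eec t‖ := by rw [hInner_eq x]
      _ = ∫ t, Set.indicator (Tg x) eec t := by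
          rw [Real.norm_eq_abs, abs_of_nonneg (integral_nonneg (hindTg0 x))]
      _ ≤ B₂ := by
          rw [hB₂_def]
          refine integral_mono_of_nonneg (Eventually.of_forall (hindTg0 x)) heec_int ?_
          refine Eventually.of_forall fun t => ?_
          by_cases h2 : t ∈ Tg x
          · exact le_of_eq (Set.indicator_of_mem h2 _)
          · rw [Set.indicator_of_notMem h2]
            exact Set.indicator_nonneg (fun u _ => hee0 u) t
  have hIndInt : Integrable (Set.indicator (Metric.ball p (s₂ + a))
      (fun x => ∫ t in {t | u₁ x < h t ∧ h t < u₀ x}, e t)) μ := by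
    refine Integrable.mono' (integrable_const B₂)
      ((hmeasF.indicator Metric.isOpen_ball.measurableSet).aestronglyMeasurable) ?_
    exact Eventually.of_forall hFle
  have step3 : (∫ x, (∫ r, Φ (x, r) ∂ν) ∂μ)
      ≤ ∫ x, Set.indicator (Metric.ball p (s₂ + a))
          (fun x => ∫ t in {t | u₁ x < h t ∧ h t < u₀ x}, e t) x ∂μ :=
    integral_mono_of_nonneg
      (Eventually.of_forall fun x => integral_nonneg fun r => hΦ0 _)
      hIndInt (Eventually.of_forall hxle)
  have step4 : (∫ x, Set.indicator (Metric.ball p (s₂ + a))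
          (fun x => ∫ t in {t | u₁ x < h t ∧ h t < u₀ x}, e t) x ∂μ)
      = ∫ x in Metric.ball p (s₂ + a), (∫ t in {t | u₁ x < h t ∧ h t < u₀ x}, e t) ∂μ :=
    integral_indicator Metric.isOpen_ball.measurableSet
  exact le_trans step1 (le_trans (le_of_eq step2) (le_trans step3 (le_of_eq step4)))
end
end

section
/- Let W be a standard double-well potential with sup_{t∈[−1,1]} W(t)/(1−t)² = C₁ < ∞, let q be the heteroclinic solution of q' = √(2W(q)), q(0)=0, and for ε > 0 define the truncated profile q̂_ε which equals q(t/ε) for |t| ≤ √ε, interpolates linearly to ±1 on √ε ≤ |t| ≤ 2√ε, and equals ±1 for |t| ≥ 2√ε. Then for every ε₁ > 0 there exists C₀ = C₀(W, ε₁) such that for all 0 < ε ≤ ε₁ and all t, (ε/2) q̂_ε'(t)² + W(q̂_ε(t))/ε ≤ C₀ · q̂_ε'(t) wherever q̂_ε' ≠ 0; equivalently, viewing q̂_ε as a bijection [−2√ε, 2√ε] → [−1,1], the function s ↦ (ε/2) q̂_ε'(q̂_ε^{−1}(s)) + (1/ε) W(s)/ q̂_ε'(q̂_ε^{−1}(s))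 is bounded on [−1,1] by C₀ independently of ε ∈ (0, ε₁]. -/
open MeasureTheory Filter
open scoped ENNReal

noncomputable section

/-- The truncated one-dimensional profile `q̂_ε`: equals `q(t/ε)` for `|t| ≤ √ε`, interpolates
linearly to `±1` on `√ε ≤ |t| ≤ 2√ε`, and equals `±1` for `|t| ≥ 2√ε`. -/
def qhat (q : ℝ → ℝ) (ε t : ℝ) : ℝ :=
  if |t| ≤ Real.sqrt ε then q (t / ε)
  else if 2 * Real.sqrt ε ≤ |t| then (if 0 < t then 1 else -1)
  else if 0 < t then
    q (Real.sqrt ε / ε) + (t / Real.sqrt ε - 1) * (1 - q (Real.sqrt ε / ε))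
  else
    q (-(Real.sqrt ε) / ε) + (t / Real.sqrt ε + 1) * (1 + q (-(Real.sqrt ε) / ε))

open scoped ContDiff in
lemma dw_lower {W : ℝ → ℝ} (hW : DoubleWell W) :
    ∃ c > (0:ℝ), ∀ s ∈ Set.Ico (0:ℝ) 1, c * (1 - s)^2 ≤ W s := by
  have hW1 : W 1 = 0 := (hW.zero_iff 1).mpr (Or.inl rfl)
  have hW'1 : deriv W 1 = 0 := (hW.critical_iff 1).mpr (Or.inr (Or.inl rfl))
  have hWs : ContDiff ℝ ∞ W := hW.smooth.of_le (by simp)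
  have hWd : ContDiff ℝ ∞ (deriv W) := (contDiff_infty_iff_deriv.mp hWs).2
  have hWcont : Continuous W := hW.smooth.continuous
  have hW'cont : Continuous (deriv W) := hWd.continuous
  have hWdiff : Differentiable ℝ W := hWs.differentiable (by norm_num)
  have hW'diff : Differentiable ℝ (deriv W) := hWd.differentiable (by norm_num)
  set lam : ℝ := deriv (deriv W) 1 / 2 with hlam_def
  have hlam : 0 < lam := half_pos hW.second_deriv_pos
  -- find δ with W'' > lam near 1
  have hopen : IsOpen {x : ℝ | lam < deriv (deriv W) x} :=
    isOpen_lt continuous_const (contDiff_infty_iff_deriv.mp hWd).2.continuous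
  have hmem : (1:ℝ) ∈ {x : ℝ | lam < deriv (deriv W) x} := by
    simp only [Set.mem_setOf_eq, hlam_def]
    linarith [hW.second_deriv_pos]
  obtain ⟨δ, hδpos, hball⟩ := Metric.isOpen_iff.mp hopen 1 hmem
  set δ' : ℝ := min (δ/2) (1/2) with hδ'_def
  have hδ'pos : 0 < δ' := lt_min (half_pos hδpos) (by norm_num)
  have hδ'le : δ' ≤ 1/2 := min_le_right _ _
  have hδ'lt : δ' < δ := lt_of_le_of_lt (min_le_left _ _) (by linarith)
  have hsub : ∀ x ∈ Set.Icc (1-δ') 1, lam < deriv (deriv W) x := by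
    intro x hx
    apply hball
    simp only [Metric.mem_ball, Real.dist_eq]
    rw [abs_sub_lt_iff]
    constructor <;> [linarith [hx.2]; linarith [hx.1]]
  -- p = W' + lam (1 - ·) is monotone on [1-δ',1]
  set p : ℝ → ℝ := fun s => deriv W s + lam * (1 - s) with hp_def
  have hp' : ∀ x, HasDerivAt p (deriv (deriv W) x - lam) x := by
    intro x
    have h1 : HasDerivAt (fun s : ℝ => lam * (1 - s)) (-lam) x := by
      have := ((hasDerivAt_id x).const_sub 1).const_mul lam
      simpa using this
    have h2 : HasDerivAt (deriv W) (deriv (deriv W) x) x := (hW'diff x).hasDerivAt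
    exact (h2.add h1).congr_deriv (by ring)
  have hpmono : MonotoneOn p (Set.Icc (1-δ') 1) := by
    apply monotoneOn_of_deriv_nonneg (convex_Icc _ _)
    · exact (hW'cont.add (continuous_const.mul (continuous_const.sub continuous_id))).continuousOn
    · intro x _
      exact ((hp' x).differentiableAt).differentiableWithinAt
    · intro x hx
      rw [interior_Icc] at hx
      rw [(hp' x).deriv]
      have := hsub x ⟨hx.1.le, hx.2.le⟩
      linarith
  have hp1 : p 1 = 0 := by simp [hp_def, hW'1]
  have hple : ∀ s ∈ Set.Icc (1-δ') 1, p s ≤ 0 := by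
    intro s hs
    calc p s ≤ p 1 := hpmono hs (Set.right_mem_Icc.mpr (by linarith)) hs.2
    _ = 0 := hp1
  -- g = W - lam/2 (1-·)^2 is antitone on [1-δ',1]
  set g : ℝ → ℝ := fun s => W s - lam/2 * (1 - s)^2 with hg_def
  have hg' : ∀ x, HasDerivAt g (p x) x := by
    intro x
    have h1 : HasDerivAt (fun s : ℝ => lam/2 * (1 - s)^2)
        (lam/2 * (2 * (1 - x)^1 * (-1))) x := by
      exact (((hasDerivAt_id x).const_sub 1).pow 2).const_mul (lam/2)
    have h2 : HasDerivAt W (deriv W x) x := (hWdiff x).hasDerivAt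
    have := h2.sub h1
    exact this.congr_deriv (by show _ = deriv W x + lam * (1 - x); ring)
  have hganti : AntitoneOn g (Set.Icc (1-δ') 1) := by
    apply antitoneOn_of_deriv_nonpos (convex_Icc _ _)
    · exact (hWcont.sub (continuous_const.mul ((continuous_const.sub continuous_id).pow 2))).continuousOn
    · intro x _
      exact ((hg' x).differentiableAt).differentiableWithinAt
    · intro x hx
      rw [interior_Icc] at hx
      rw [(hg' x).deriv]
      exact hple x ⟨hx.1.le, hx.2.le⟩
  have hnear : ∀ s ∈ Set.Icc (1-δ') 1, lam/2 * (1-s)^2 ≤ W s := by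
    intro s hs
    have := hganti hs (Set.right_mem_Icc.mpr (by linarith)) hs.2
    simp only [hg_def, hW1] at this
    simp at this
    linarith
  -- compact part
  have hK : IsCompact (Set.Icc (0:ℝ) (1-δ')) := isCompact_Icc
  have hKne : (Set.Icc (0:ℝ) (1-δ')).Nonempty := Set.nonempty_Icc.mpr (by linarith)
  obtain ⟨x₀, hx₀mem, hx₀min⟩ := hK.exists_isMinOn hKne hWcont.continuousOn
  have hx₀pos : 0 < W x₀ := by
    rcases lt_or_eq_of_le (hW.nonneg x₀) with h | h
    · exact h
    · exfalso
      rcases (hW.zero_iff x₀).mp h.symm with h1 | h1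
      · rw [h1] at hx₀mem; have := hx₀mem.2; linarith
      · rw [h1] at hx₀mem; have := hx₀mem.1; linarith
  refine ⟨min (lam/2) (W x₀), lt_min (half_pos hlam) hx₀pos, ?_⟩
  intro s hs
  rcases le_or_gt s (1-δ') with h | h
  · have h1 : (1-s)^2 ≤ 1 := by nlinarith [hs.1, hs.2]
    have h2 : W x₀ ≤ W s := hx₀min ⟨hs.1, h⟩
    have h3 : min (lam/2) (W x₀) ≤ W x₀ := min_le_right _ _
    nlinarith [lt_min (half_pos hlam) hx₀pos, sq_nonneg (1-s)]
  · have := hnear s ⟨h.le, hs.2.le⟩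
    have h3 : min (lam/2) (W x₀) ≤ lam/2 := min_le_left _ _
    nlinarith [sq_nonneg (1-s)]

lemma q_decay {W q : ℝ → ℝ} (hW : DoubleWell W) {c : ℝ} (hc : 0 < c)
    (hlow : ∀ s ∈ Set.Ico (0:ℝ) 1, c * (1 - s)^2 ≤ W s)
    (hq0 : q 0 = 0) (hODE : ∀ t, HasDerivAt q (Real.sqrt (2 * W (q t))) t)
    (hqb : ∀ t, -1 < q t ∧ q t < 1) :
    (∀ τ : ℝ, 0 ≤ τ → 1 - q τ ≤ Real.exp (-(Real.sqrt (2*c) * τ))) ∧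
    (∀ τ : ℝ, τ ≤ 0 → 1 + q τ ≤ Real.exp (Real.sqrt (2*c) * τ)) := by
  set k : ℝ := Real.sqrt (2*c) with hk_def
  have hk : 0 < k := Real.sqrt_pos.mpr (by linarith)
  have qdiff : Differentiable ℝ q := fun t => (hODE t).differentiableAt
  have qmono : Monotone q := by
    apply monotone_of_deriv_nonneg qdiff
    intro t
    rw [(hODE t).deriv]
    exact Real.sqrt_nonneg _
  have key : ∀ τ : ℝ, 0 ≤ q τ → k * (1 - q τ) ≤ Real.sqrt (2 * W (q τ)) := by
    intro τ h
    have hlt : q τ < 1 := (hqb τ).2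
    have h1 : c * (1 - q τ)^2 ≤ W (q τ) := hlow _ ⟨h, hlt⟩
    have h2 : Real.sqrt (2 * (c * (1 - q τ)^2)) ≤ Real.sqrt (2 * W (q τ)) :=
      Real.sqrt_le_sqrt (by linarith)
    calc k * (1 - q τ) = Real.sqrt (2*c) * Real.sqrt ((1 - q τ)^2) := by
          rw [Real.sqrt_sq (by linarith)]
      _ = Real.sqrt (2 * (c * (1 - q τ)^2)) := by
          rw [← Real.sqrt_mul (by linarith)]; ring_nf
      _ ≤ _ := h2
  have key2 : ∀ τ : ℝ, q τ ≤ 0 → k * (1 + q τ) ≤ Real.sqrt (2 * W (q τ)) := by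
    intro τ h
    have hgt : -1 < q τ := (hqb τ).1
    have hWsymm : W (q τ) = W (- q τ) := by
      have := hW.symm (- q τ); rw [neg_neg] at this; exact this

    have h1 : c * (1 - (- q τ))^2 ≤ W (- q τ) := hlow _ ⟨by linarith, by linarith⟩
    have h1' : c * (1 + q τ)^2 ≤ W (q τ) := by
      rw [hWsymm]; calc c * (1 + q τ)^2 = c * (1 - (- q τ))^2 := by ring
        _ ≤ _ := h1
    have h2 : Real.sqrt (2 * (c * (1 + q τ)^2)) ≤ Real.sqrt (2 * W (q τ)) :=
      Real.sqrt_le_sqrt (by linarith)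
    calc k * (1 + q τ) = Real.sqrt (2*c) * Real.sqrt ((1 + q τ)^2) := by
          rw [Real.sqrt_sq (by linarith)]
      _ = Real.sqrt (2 * (c * (1 + q τ)^2)) := by
          rw [← Real.sqrt_mul (by linarith)]; ring_nf
      _ ≤ _ := h2
  constructor
  · -- positive side
    set h : ℝ → ℝ := fun τ => (1 - q τ) * Real.exp (k * τ) with hh_def
    have hd : ∀ τ, HasDerivAt h
        ((-(Real.sqrt (2 * W (q τ)))) * Real.exp (k * τ)
          + (1 - q τ) * (Real.exp (k * τ) * k)) τ := by
      intro τ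
      have h2 : HasDerivAt (fun τ : ℝ => Real.exp (k * τ)) (Real.exp (k*τ) * k) τ := by
        simpa using ((hasDerivAt_id τ).const_mul k).exp
      exact ((hODE τ).const_sub 1).mul h2
    have hanti : AntitoneOn h (Set.Ici 0) := by
      apply antitoneOn_of_deriv_nonpos (convex_Ici 0)
      · exact ((continuous_const.sub qdiff.continuous).mul (Real.continuous_exp.comp (continuous_const.mul continuous_id))).continuousOn
      · intro x _
        exact (hd x).differentiableAt.differentiableWithinAt
      · intro x hx
        rw [interior_Ici] at hx
        rw [(hd x).deriv]
        have hq0x : 0 ≤ q x := hq0 ▸ qmono hx.le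
        have := key x hq0x
        nlinarith [Real.exp_pos (k * x), (hqb x).2]
    intro τ hτ
    have := hanti (Set.self_mem_Ici) (Set.mem_Ici.mpr hτ) hτ
    have h0 : h 0 = 1 := by simp [hh_def, hq0]
    rw [h0] at this
    calc 1 - q τ = h τ * Real.exp (-(k * τ)) := by
          rw [hh_def]; simp only []; rw [mul_assoc, ← Real.exp_add]; simp
      _ ≤ 1 * Real.exp (-(k * τ)) :=
          mul_le_mul_of_nonneg_right this (Real.exp_pos _).le
      _ = Real.exp (-(k * τ)) := one_mul _
  · -- negative side
    set h : ℝ → ℝ := fun τ => (1 + q τ) * Real.exp (-(k * τ)) with hh_def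
    have hd : ∀ τ, HasDerivAt h
        ((Real.sqrt (2 * W (q τ))) * Real.exp (-(k * τ))
          + (1 + q τ) * (Real.exp (-(k * τ)) * (-k))) τ := by
      intro τ
      have h2 : HasDerivAt (fun τ : ℝ => Real.exp (-(k * τ))) (Real.exp (-(k*τ)) * (-k)) τ :=
        by simpa using (((hasDerivAt_id τ).const_mul k).neg).exp
      exact ((hODE τ).const_add 1).mul h2
    have hmono : MonotoneOn h (Set.Iic 0) := by
      apply monotoneOn_of_deriv_nonneg (convex_Iic 0)
      · exact ((continuous_const.add qdiff.continuous).mul (Real.continuous_exp.comp (continuous_const.mul continuous_id).neg)).continuousOn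
      · intro x _
        exact (hd x).differentiableAt.differentiableWithinAt
      · intro x hx
        rw [interior_Iic] at hx
        rw [(hd x).deriv]
        have hq0x : q x ≤ 0 := hq0 ▸ qmono hx.le
        have := key2 x hq0x
        nlinarith [Real.exp_pos (-(k * x)), (hqb x).1]
    intro τ hτ
    have := hmono (Set.mem_Iic.mpr hτ) (Set.self_mem_Iic) hτ
    have h0 : h 0 = 1 := by simp [hh_def, hq0]
    rw [h0] at this
    calc 1 + q τ = h τ * Real.exp (k * τ) := by
          rw [hh_def]; simp only []; rw [mul_assoc, ← Real.exp_add]; simp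
      _ ≤ 1 * Real.exp (k * τ) :=
          mul_le_mul_of_nonneg_right this (Real.exp_pos _).le
      _ = Real.exp (k * τ) := one_mul _

section QhatAux
variable {q : ℝ → ℝ} {ε t : ℝ}

lemma qhat_eq_lin_right (hε : 0 < ε) :
    ∀ s ∈ Set.Ico (Real.sqrt ε) (2 * Real.sqrt ε),
      qhat q ε s = q (Real.sqrt ε / ε)
        + (s / Real.sqrt ε - 1) * (1 - q (Real.sqrt ε / ε)) := by
  intro s hs
  have hr : 0 < Real.sqrt ε := Real.sqrt_pos.mpr hε
  rcases eq_or_lt_of_le hs.1 with h | h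
  · subst h
    rw [qhat, if_pos (by rw [abs_of_pos hr]), div_self hr.ne']
    ring
  · have hs0 : 0 < s := lt_trans hr h
    have habs : |s| = s := abs_of_pos hs0
    rw [qhat, if_neg (by rw [habs]; exact not_le.mpr h),
      if_neg (not_le.mpr (by rw [habs]; exact hs.2)), if_pos hs0]

lemma qhat_eq_lin_left (hε : 0 < ε) :
    ∀ s ∈ Set.Ioc (-(2 * Real.sqrt ε)) (-(Real.sqrt ε)),
      qhat q ε s = q (-(Real.sqrt ε) / ε)
        + (s / Real.sqrt ε + 1) * (1 + q (-(Real.sqrt ε) / ε)) := by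
  intro s hs
  have hr : 0 < Real.sqrt ε := Real.sqrt_pos.mpr hε
  rcases eq_or_lt_of_le hs.2 with h | h
  · subst h
    rw [qhat, if_pos (by rw [abs_neg, abs_of_pos hr])]
    rw [neg_div, neg_div, div_self hr.ne']
    ring
  · have hs0 : s < 0 := by linarith
    have habs : |s| = -s := abs_of_neg hs0
    rw [qhat, if_neg (by rw [habs]; push_neg; linarith [hs.2]),
      if_neg (by rw [habs]; push_neg; linarith [hs.1]), if_neg (not_lt.mpr hs0.le)]

lemma qhat_eq_one (hε : 0 < ε) :
    ∀ s ∈ Set.Ici (2 * Real.sqrt ε), qhat q ε s = 1 := by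
  intro s hs
  have hr : 0 < Real.sqrt ε := Real.sqrt_pos.mpr hε
  have hs0 : 0 < s := lt_of_lt_of_le (by linarith) hs
  have habs : |s| = s := abs_of_pos hs0
  rw [qhat, if_neg (by rw [habs]; push_neg; linarith [Set.mem_Ici.mp hs]),
    if_pos (by rw [habs]; exact hs), if_pos hs0]

lemma qhat_eq_neg_one (hε : 0 < ε) :
    ∀ s ∈ Set.Iic (-(2 * Real.sqrt ε)), qhat q ε s = -1 := by
  intro s hs
  have hr : 0 < Real.sqrt ε := Real.sqrt_pos.mpr hε
  have hs0 : s < 0 := lt_of_le_of_lt hs (by linarith)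
  have habs : |s| = -s := abs_of_neg hs0
  rw [qhat, if_neg (by rw [habs]; push_neg; linarith [Set.mem_Iic.mp hs]),
    if_pos (by rw [habs]; linarith [Set.mem_Iic.mp hs]), if_neg (not_lt.mpr hs0.le)]

lemma qhat_deriv_inner {W : ℝ → ℝ} (hε : 0 < ε) (h : |t| < Real.sqrt ε)
    (hODE : ∀ t, HasDerivAt q (Real.sqrt (2 * W (q t))) t) :
    deriv (qhat q ε) t = Real.sqrt (2 * W (q (t / ε))) * (1 / ε) := by
  have hev : qhat q ε =ᶠ[nhds t] fun s => q (s / ε) := by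
    have : ∀ᶠ s in nhds t, |s| < Real.sqrt ε :=
      (continuous_abs.continuousAt (x := t)).eventually_lt continuousAt_const h
    filter_upwards [this] with s hs
    rw [qhat, if_pos hs.le]
  rw [hev.deriv_eq]
  exact (((hODE (t / ε)).comp t ((hasDerivAt_id t).div_const ε))).deriv

lemma qhat_deriv_right (hε : 0 < ε) (h1 : Real.sqrt ε ≤ t) (h2 : t < 2 * Real.sqrt ε)
    (hd : DifferentiableAt ℝ (qhat q ε) t) :
    deriv (qhat q ε) t = 1 / Real.sqrt ε * (1 - q (Real.sqrt ε / ε)) := by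
  set S := Set.Ico (Real.sqrt ε) (2 * Real.sqrt ε)
  have htS : t ∈ S := ⟨h1, h2⟩
  have hu : UniqueDiffWithinAt ℝ S t := uniqueDiffOn_Ico _ _ t htS
  have A : HasDerivWithinAt (qhat q ε) (deriv (qhat q ε) t) S t :=
    hd.hasDerivAt.hasDerivWithinAt
  have A' : HasDerivWithinAt
      (fun s => q (Real.sqrt ε / ε) + (s / Real.sqrt ε - 1) * (1 - q (Real.sqrt ε / ε)))
      (deriv (qhat q ε) t) S t :=
    A.congr (fun x hx => (qhat_eq_lin_right hε x hx).symm) (qhat_eq_lin_right hε t htS).symm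
  have B : HasDerivWithinAt
      (fun s => q (Real.sqrt ε / ε) + (s / Real.sqrt ε - 1) * (1 - q (Real.sqrt ε / ε)))
      (1 / Real.sqrt ε * (1 - q (Real.sqrt ε / ε))) S t := by
    exact ((((hasDerivAt_id t).div_const (Real.sqrt ε)).sub_const 1).mul_const
      _).const_add _ |>.hasDerivWithinAt
  rw [← A'.derivWithin hu, B.derivWithin hu]

lemma qhat_deriv_left (hε : 0 < ε) (h1 : -(2 * Real.sqrt ε) < t) (h2 : t ≤ -(Real.sqrt ε))
    (hd : DifferentiableAt ℝ (qhat q ε) t) :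
    deriv (qhat q ε) t = 1 / Real.sqrt ε * (1 + q (-(Real.sqrt ε) / ε)) := by
  set S := Set.Ioc (-(2 * Real.sqrt ε)) (-(Real.sqrt ε))
  have htS : t ∈ S := ⟨h1, h2⟩
  have hu : UniqueDiffWithinAt ℝ S t := uniqueDiffOn_Ioc _ _ t htS
  have A : HasDerivWithinAt (qhat q ε) (deriv (qhat q ε) t) S t :=
    hd.hasDerivAt.hasDerivWithinAt
  have A' : HasDerivWithinAt
      (fun s => q (-(Real.sqrt ε) / ε) + (s / Real.sqrt ε + 1) * (1 + q (-(Real.sqrt ε) / ε)))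
      (deriv (qhat q ε) t) S t :=
    A.congr (fun x hx => (qhat_eq_lin_left hε x hx).symm) (qhat_eq_lin_left hε t htS).symm
  have B : HasDerivWithinAt
      (fun s => q (-(Real.sqrt ε) / ε) + (s / Real.sqrt ε + 1) * (1 + q (-(Real.sqrt ε) / ε)))
      (1 / Real.sqrt ε * (1 + q (-(Real.sqrt ε) / ε))) S t := by
    exact ((((hasDerivAt_id t).div_const (Real.sqrt ε)).add_const 1).mul_const
      _).const_add _ |>.hasDerivWithinAt
  rw [← A'.derivWithin hu, B.derivWithin hu]

lemma qhat_deriv_tail_pos (hε : 0 < ε) (h : 2 * Real.sqrt ε ≤ t) :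
    deriv (qhat q ε) t = 0 := by
  by_cases hd : DifferentiableAt ℝ (qhat q ε) t
  · set S := Set.Ici (2 * Real.sqrt ε)
    have htS : t ∈ S := h
    have hu : UniqueDiffWithinAt ℝ S t := uniqueDiffOn_Ici _ t htS
    have A : HasDerivWithinAt (qhat q ε) (deriv (qhat q ε) t) S t :=
      hd.hasDerivAt.hasDerivWithinAt
    have A' : HasDerivWithinAt (fun _ : ℝ => (1:ℝ)) (deriv (qhat q ε) t) S t :=
      A.congr (fun x hx => (qhat_eq_one hε x hx).symm) (qhat_eq_one hε t htS).symm
    have B : HasDerivWithinAt (fun _ : ℝ => (1:ℝ)) 0 S t :=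
      (hasDerivAt_const t 1).hasDerivWithinAt
    rw [← A'.derivWithin hu, B.derivWithin hu]
  · exact deriv_zero_of_not_differentiableAt hd

lemma qhat_deriv_tail_neg (hε : 0 < ε) (h : t ≤ -(2 * Real.sqrt ε)) :
    deriv (qhat q ε) t = 0 := by
  by_cases hd : DifferentiableAt ℝ (qhat q ε) t
  · set S := Set.Iic (-(2 * Real.sqrt ε))
    have htS : t ∈ S := h
    have hu : UniqueDiffWithinAt ℝ S t := uniqueDiffOn_Iic _ t htS
    have A : HasDerivWithinAt (qhat q ε) (deriv (qhat q ε) t) S t :=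
      hd.hasDerivAt.hasDerivWithinAt
    have A' : HasDerivWithinAt (fun _ : ℝ => (-1:ℝ)) (deriv (qhat q ε) t) S t :=
      A.congr (fun x hx => (qhat_eq_neg_one hε x hx).symm) (qhat_eq_neg_one hε t htS).symm
    have B : HasDerivWithinAt (fun _ : ℝ => (-1:ℝ)) 0 S t :=
      (hasDerivAt_const t (-1)).hasDerivWithinAt
    rw [← A'.derivWithin hu, B.derivWithin hu]
  · exact deriv_zero_of_not_differentiableAt hd

end QhatAux

lemma slope_bound {k σ r β : ℝ} (hk : 0 < k) (hr : 0 < r) (hσr : σ * r = 1)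
    (hβ : 0 ≤ β) (hβe : β ≤ Real.exp (-(k * σ))) : k * β ≤ r := by
  have hσ : 0 < σ := by nlinarith
  set E := Real.exp (k * σ) with hE_def
  have hEpos : 0 < E := Real.exp_pos _
  have hE1 : k * σ + 1 ≤ E := Real.add_one_le_exp _
  have hβE : β * E ≤ 1 := by
    have : Real.exp (-(k * σ)) * E = 1 := by rw [hE_def, ← Real.exp_add]; simp
    nlinarith [mul_le_mul_of_nonneg_right hβe hEpos.le]
  have h1 : k * (β * E) ≤ k := by nlinarith
  have h2 : k ≤ r * E := by nlinarith
  nlinarith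

lemma est_lemma {C₁ k sr1 S2 σ r ε β Wu : ℝ} (hk : 0 < k) (hr : 0 < r)
    (hσr : σ * r = 1) (hε' : ε = r * r) (hβpos : 0 < β) (hβ1 : β ≤ 1)
    (hβr : k * β ≤ r) (hr1 : r ≤ sr1) (hS2 : 0 ≤ S2)
    (hWu : Wu ≤ C₁ * β^2) (hWu0 : 0 ≤ Wu) (hC₁ : 0 < C₁) :
    ε / 2 * (σ * β)^2 + Wu / ε ≤ (S2 + sr1 + C₁ / k + 1) * (σ * β) := by
  have hσ : 0 < σ := by nlinarith
  have hεpos : 0 < ε := by nlinarith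
  have hA : ε / 2 * (σ * β)^2 = β^2 / 2 := by
    have h : ε / 2 * (σ * β)^2 = (σ * r)^2 * β^2 / 2 := by rw [hε']; ring
    rw [h, hσr]; ring
  have hA2 : β^2 / 2 ≤ sr1 * (σ * β) := by
    have h1 : 1 ≤ sr1 * σ := by nlinarith
    nlinarith [mul_pos hσ hβpos]
  have hinv : 1 / ε = σ * σ := by
    rw [hε']
    field_simp
    nlinarith [sq_nonneg (σ*r - 1)]
  have hB : Wu / ε ≤ C₁ / k * (σ * β) := by
    rw [div_eq_mul_inv, show ε⁻¹ = σ * σ by rw [← one_div, hinv]]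
    have hCk : C₁ / k * k = C₁ := div_mul_cancel₀ _ hk.ne'
    have hF2 : k * β * σ ≤ 1 := by nlinarith
    have hQnn : 0 ≤ C₁ / k := le_of_lt (div_pos hC₁ hk)
    nlinarith [mul_le_mul_of_nonneg_right hWu (mul_nonneg hσ.le hσ.le),
      mul_le_mul_of_nonneg_left hF2 (mul_nonneg hQnn (mul_nonneg hβpos.le hσ.le))]
  have hrest : 0 ≤ (S2 + 1) * (σ * β) := by positivity
  calc ε / 2 * (σ * β)^2 + Wu / ε ≤ sr1 * (σ * β) + C₁ / k * (σ * β) := by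
        rw [hA]; linarith
    _ ≤ (S2 + sr1 + C₁ / k + 1) * (σ * β) := by nlinarith

set_option maxHeartbeats 1000000 in
/-- uniform bound for the energy density of the truncated profile: there is
`C₀ = C₀(W, ε₁)` with `(ε/2) q̂_ε'(t)² + W(q̂_ε(t))/ε ≤ C₀ q̂_ε'(t)` wherever `q̂_ε' ≠ 0`,
for all `0 < ε ≤ ε₁`. -/
theorem truncated_profile_density_bound
    (W : ℝ → ℝ) (hW : DoubleWell W) (C₁ : ℝ)
    (hC₁ : ∀ t ∈ Set.Icc (-1:ℝ) 1, W t ≤ C₁ * (1 - t) ^ 2)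
    (q : ℝ → ℝ) (hq0 : q 0 = 0)
    (hODE : ∀ t, HasDerivAt q (Real.sqrt (2 * W (q t))) t)
    (hqb : ∀ t, -1 < q t ∧ q t < 1)
    (ε₁ : ℝ) (hε₁ : 0 < ε₁) :
    ∃ C₀ > (0:ℝ), ∀ ε, 0 < ε → ε ≤ ε₁ → ∀ t, deriv (qhat q ε) t ≠ 0 →
      ε / 2 * (deriv (qhat q ε) t) ^ 2 + W (qhat q ε t) / ε ≤ C₀ * deriv (qhat q ε) t := by
  obtain ⟨Cw, hCw⟩ := hW.bounded
  have hCw0 : 0 ≤ Cw := le_trans (hW.nonneg 0) (hCw 0)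
  obtain ⟨c, hc, hlow⟩ := dw_lower hW
  have hk : 0 < Real.sqrt (2*c) := Real.sqrt_pos.mpr (by linarith)
  obtain ⟨hdecP, hdecN⟩ := q_decay hW hc hlow hq0 hODE hqb
  have hC₁pos : 0 < C₁ := by
    have hW0 : 0 < W 0 := by
      rcases lt_or_eq_of_le (hW.nonneg 0) with h|h
      · exact h
      · exfalso; rcases (hW.zero_iff 0).mp h.symm with h1|h1 <;> norm_num at h1
    have := hC₁ 0 (by norm_num)
    nlinarith
  have hS2 : 0 ≤ Real.sqrt (2*Cw) := Real.sqrt_nonneg _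
  have hsr1 : 0 ≤ Real.sqrt ε₁ := Real.sqrt_nonneg _
  refine ⟨Real.sqrt (2*Cw) + Real.sqrt ε₁ + C₁ / Real.sqrt (2*c) + 1, by positivity, ?_⟩
  intro ε hε hεε₁ t hder
  have hr : 0 < Real.sqrt ε := Real.sqrt_pos.mpr hε
  have hε' : ε = Real.sqrt ε * Real.sqrt ε := (Real.mul_self_sqrt hε.le).symm
  have hσeq : Real.sqrt ε / ε = 1 / Real.sqrt ε := by
    rw [hε', ← Real.sqrt_mul_self hε.le]
    rw [Real.sqrt_mul_self hε.le]
    field_simp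
    rw [Real.sqrt_sq hr.le]
  have hσr : 1 / Real.sqrt ε * Real.sqrt ε = 1 := one_div_mul_cancel hr.ne'
  have hσ0 : 0 < 1 / Real.sqrt ε := by positivity
  have hrle : Real.sqrt ε ≤ Real.sqrt ε₁ := Real.sqrt_le_sqrt hεε₁
  have hdiff : DifferentiableAt ℝ (qhat q ε) t := by
    by_contra h; exact hder (deriv_zero_of_not_differentiableAt h)
  have qmono : Monotone q := monotone_of_deriv_nonneg (fun s => (hODE s).differentiableAt)
      (fun s => by rw [(hODE s).deriv]; exact Real.sqrt_nonneg _)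
  rcases lt_or_ge |t| (Real.sqrt ε) with hcase | hcase
  · -- inner region
    have hD := qhat_deriv_inner (q := q) hε hcase hODE
    have hval : qhat q ε t = q (t/ε) := by rw [qhat, if_pos hcase.le]
    rw [hD, hval]
    have hSnn : 0 ≤ Real.sqrt (2 * W (q (t/ε))) := Real.sqrt_nonneg _
    have hS2' : (Real.sqrt (2 * W (q (t/ε))))^2 = 2 * W (q (t/ε)) :=
      Real.sq_sqrt (by nlinarith [hW.nonneg (q (t/ε))])
    have hSle : Real.sqrt (2 * W (q (t/ε)))
        ≤ Real.sqrt (2*Cw) + Real.sqrt ε₁ + C₁ / Real.sqrt (2*c) + 1 := by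
      have h1 : Real.sqrt (2 * W (q (t/ε))) ≤ Real.sqrt (2*Cw) :=
        Real.sqrt_le_sqrt (by linarith [hCw (q (t/ε))])
      have := div_pos hC₁pos hk
      linarith
    have e1 : ε/2 * (Real.sqrt (2 * W (q (t/ε))) * (1/ε))^2 + W (q (t/ε)) / ε
        = (Real.sqrt (2 * W (q (t/ε))))^2 * (1/ε) := by
      have hWu : W (q (t/ε)) = (Real.sqrt (2 * W (q (t/ε))))^2 / 2 := by rw [hS2']; ring
      rw [mul_pow, hS2']
      have hinv : ε * (1/ε) = 1 := mul_one_div_cancel hε.ne'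
      calc _ = (ε * (1/ε)) * W (q (t/ε)) * (1/ε) + W (q (t/ε)) / ε := by ring
        _ = _ := by rw [hinv]; ring
    have e2 : (Real.sqrt (2 * W (q (t/ε))))^2 * (1/ε)
        ≤ (Real.sqrt (2*Cw) + Real.sqrt ε₁ + C₁ / Real.sqrt (2*c) + 1)
          * (Real.sqrt (2 * W (q (t/ε))) * (1/ε)) := by
      rw [pow_two, mul_assoc]
      exact mul_le_mul_of_nonneg_right hSle (by positivity)
    linarith
  rcases le_or_gt (2 * Real.sqrt ε) |t| with hcase2 | hcase2
  · -- constant tails: derivative vanishes, contradiction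
    exfalso
    rcases le_or_gt 0 t with ht | ht
    · rw [abs_of_nonneg ht] at hcase2
      exact hder (qhat_deriv_tail_pos hε hcase2)
    · rw [abs_of_neg ht] at hcase2
      exact hder (qhat_deriv_tail_neg hε (by linarith))
  rcases le_or_gt 0 t with ht | ht
  · -- right linear region
    rw [abs_of_nonneg ht] at hcase hcase2
    have hD := qhat_deriv_right (q := q) hε hcase hcase2 hdiff
    have hval := qhat_eq_lin_right (q := q) hε t ⟨hcase, hcase2⟩
    rw [hD, hval]
    have ha0 : 0 ≤ q (Real.sqrt ε / ε) := by
      rw [← hq0]; exact qmono (by positivity)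
    have ha1 : q (Real.sqrt ε / ε) < 1 := (hqb _).2
    have hβpos : 0 < 1 - q (Real.sqrt ε / ε) := by linarith
    have hβ1 : 1 - q (Real.sqrt ε / ε) ≤ 1 := by linarith
    have hβr : Real.sqrt (2*c) * (1 - q (Real.sqrt ε / ε)) ≤ Real.sqrt ε := by
      apply slope_bound hk hr hσr hβpos.le
      rw [← hσeq]
      exact hdecP (Real.sqrt ε / ε) (by positivity)
    have hθ0 : 0 ≤ t / Real.sqrt ε - 1 := by
      rw [sub_nonneg, le_div_iff₀ hr]; linarith
    have hθ1 : t / Real.sqrt ε - 1 ≤ 1 := by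
      rw [sub_le_iff_le_add, div_le_iff₀ hr]; linarith
    have humem : qhat q ε t ∈ Set.Icc (-1:ℝ) 1 := by
      rw [hval]; constructor
      · nlinarith
      · nlinarith
    have h1u : 1 - (q (Real.sqrt ε / ε) + (t / Real.sqrt ε - 1) * (1 - q (Real.sqrt ε / ε)))
        = (1 - (t / Real.sqrt ε - 1)) * (1 - q (Real.sqrt ε / ε)) := by ring
    have hWu : W (q (Real.sqrt ε / ε) + (t / Real.sqrt ε - 1) * (1 - q (Real.sqrt ε / ε)))
        ≤ C₁ * (1 - q (Real.sqrt ε / ε))^2 := by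
      have h2 := hC₁ _ (hval ▸ humem)
      rw [h1u] at h2
      have h5 : ((1 - (t / Real.sqrt ε - 1)) * (1 - q (Real.sqrt ε / ε)))^2
          ≤ (1 - q (Real.sqrt ε / ε))^2 := by
        nlinarith [sq_nonneg (1 - q (Real.sqrt ε / ε)), mul_nonneg hθ0 (sub_nonneg.mpr hθ1)]
      nlinarith [mul_le_mul_of_nonneg_left h5 hC₁pos.le]
    exact est_lemma hk hr hσr hε' hβpos hβ1 hβr hrle hS2 hWu
      (hW.nonneg _) hC₁pos
  · -- left linear region
    rw [abs_of_neg ht] at hcase hcase2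
    have hD := qhat_deriv_left (q := q) hε (by linarith) (by linarith) hdiff
    have hval := qhat_eq_lin_left (q := q) hε t ⟨by linarith, by linarith⟩
    rw [hD, hval]
    have ha0 : q (-(Real.sqrt ε) / ε) ≤ 0 := by
      rw [← hq0]
      apply qmono
      rw [neg_div]
      simp only [Left.neg_nonpos_iff]
      positivity
    have ha1 : -1 < q (-(Real.sqrt ε) / ε) := (hqb _).1
    have hβpos : 0 < 1 + q (-(Real.sqrt ε) / ε) := by linarith
    have hβ1 : 1 + q (-(Real.sqrt ε) / ε) ≤ 1 := by linarith
    have hβr : Real.sqrt (2*c) * (1 + q (-(Real.sqrt ε) / ε)) ≤ Real.sqrt ε := by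
      apply slope_bound hk hr hσr hβpos.le
      have h1 := hdecN (-(Real.sqrt ε) / ε) (by rw [neg_div]; simp only [Left.neg_nonpos_iff]; positivity)
      have h2 : Real.sqrt (2*c) * (-(Real.sqrt ε) / ε) = -(Real.sqrt (2*c) * (1 / Real.sqrt ε)) := by
        rw [neg_div, hσeq]; ring
      rw [h2] at h1
      exact h1
    have hθ0 : t / Real.sqrt ε + 1 ≤ 0 := by
      have : t / Real.sqrt ε ≤ -1 := by
        rw [div_le_iff₀ hr]; linarith
      linarith
    have hθ1 : -1 ≤ t / Real.sqrt ε + 1 := by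
      have : -2 ≤ t / Real.sqrt ε := by
        rw [le_div_iff₀ hr]; linarith
      linarith
    have humem : qhat q ε t ∈ Set.Icc (-1:ℝ) 1 := by
      rw [hval]; constructor
      · nlinarith
      · nlinarith
    have h1u : 1 + (q (-(Real.sqrt ε) / ε) + (t / Real.sqrt ε + 1) * (1 + q (-(Real.sqrt ε) / ε)))
        = (1 + (t / Real.sqrt ε + 1)) * (1 + q (-(Real.sqrt ε) / ε)) := by ring
    have hWu : W (q (-(Real.sqrt ε) / ε) + (t / Real.sqrt ε + 1) * (1 + q (-(Real.sqrt ε) / ε)))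
        ≤ C₁ * (1 + q (-(Real.sqrt ε) / ε))^2 := by
      have hmem2 : -(qhat q ε t) ∈ Set.Icc (-1:ℝ) 1 := ⟨by linarith [humem.2], by linarith [humem.1]⟩
      have h2 := hC₁ _ hmem2
      have h3 : W (qhat q ε t) = W (-(qhat q ε t)) := by
        have := hW.symm (-(qhat q ε t)); rw [neg_neg] at this; exact this
      rw [hval] at h2 h3
      rw [← h3] at h2
      have h4 : (1 - -(q (-(Real.sqrt ε) / ε) + (t / Real.sqrt ε + 1) * (1 + q (-(Real.sqrt ε) / ε))))
          = (1 + (t / Real.sqrt ε + 1)) * (1 + q (-(Real.sqrt ε) / ε)) := by ring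
      rw [h4] at h2
      have h5 : ((1 + (t / Real.sqrt ε + 1)) * (1 + q (-(Real.sqrt ε) / ε)))^2
          ≤ (1 + q (-(Real.sqrt ε) / ε))^2 := by
        nlinarith [sq_nonneg (1 + q (-(Real.sqrt ε) / ε)),
          mul_nonneg (neg_nonneg.mpr hθ0) (by linarith : (0:ℝ) ≤ (t / Real.sqrt ε + 1) + 2)]
      nlinarith [mul_le_mul_of_nonneg_left h5 hC₁pos.le]
    exact est_lemma hk hr hσr hε' hβpos hβ1 hβr hrle hS2 hWu
      (hW.nonneg _) hC₁pos
end
end
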